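/- Let ι be a finite index set, a : ι → ℝ^n with |ι| = m, b : ι → ℝ, and P = {x ∈ ℝ^n : x ≥ 0 componentwise and ∀ i ∈ ι, ⟪a_i, x⟫ ≥ b_i}. If x is an extreme point of P, then the number of nonzero coordinates of x is at most m. -/

import Mathlib

/-!
If `x` had more than `m` nonzero coordinates, the `m` functionals `⟪a i, ·⟫` together with the
coordinates vanishing at `x` would be fewer than `n` linear functionals, so they would have a
common nonzero zero `y`. Moving along `y` keeps every constraint `⟪a i, ·⟫ ≥ b i` unchanged and,
since `y` is supported where `x` is positive, keeps the coordinates nonnegative for small steps;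
hence `x ± t • y ∈ P` for small `t > 0`, contradicting extremality.
-/

open Filter Topology Module

theorem exists_ne_zero_forall_eq_zero_of_card_lt_finrank {K V κ : Type*} [Field K]
    [AddCommGroup V] [Module K V] [FiniteDimensional K V] [Finite κ]
    (φ : κ → V →ₗ[K] K) (h : Nat.card κ < finrank K V) : ∃ v ≠ 0, ∀ k, φ k v = 0 := by
  cases nonempty_fintype κ
  have hker : LinearMap.ker (LinearMap.pi φ) ≠ ⊥ :=
    LinearMap.ker_ne_bot_of_finrank_lt (by simpa using h)
  obtain ⟨v, hv, hv0⟩ := Submodule.exists_mem_ne_zero_of_ne_bot hker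
  exact ⟨v, hv0, fun k => congrFun (LinearMap.mem_ker.1 hv) k⟩

theorem eventually_forall_nonneg_add_mul {κ : Type*} [Finite κ] {x y : κ → ℝ}
    (hx : ∀ j, 0 ≤ x j) (hy : ∀ j, x j = 0 → y j = 0) :
    ∀ᶠ t in 𝓝 (0 : ℝ), ∀ j, 0 ≤ x j + t * y j := by
  refine eventually_all.2 fun j => ?_
  rcases (hx j).eq_or_lt with hxj | hxj
  · exact Eventually.of_forall fun t => by simp [← hxj, hy j hxj.symm]
  · have hcont : Tendsto (fun t : ℝ => x j + t * y j) (𝓝 0) (𝓝 (x j)) := by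
      simpa using ((continuous_id.mul continuous_const).const_add (x j)).tendsto (0 : ℝ)
    exact (hcont.eventually (lt_mem_nhds hxj)).mono fun _ => le_of_lt

theorem eq_zero_of_mem_extremePoints_of_eventually_add_smul_mem {E : Type*} [AddCommGroup E]
    [Module ℝ E] {A : Set E} {x y : E} (hx : x ∈ A.extremePoints ℝ)
    (hy : ∀ᶠ t in 𝓝 (0 : ℝ), x + t • y ∈ A) : y = 0 := by
  obtain ⟨ε, hε, hball⟩ := Metric.eventually_nhds_iff.1 hy
  have hplus : x + (ε / 2) • y ∈ A := hball (by simp [abs_of_pos hε, hε])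
  have hminus : x + (-(ε / 2)) • y ∈ A := hball (by simp [abs_of_pos hε, hε])
  have hseg : x ∈ openSegment ℝ (x + (ε / 2) • y) (x + (-(ε / 2)) • y) :=
    ⟨1 / 2, 1 / 2, by norm_num, by norm_num, by norm_num, by module⟩
  have hfix : x + (ε / 2) • y = x := hx.2 hplus hminus hseg
  simpa [hε.ne'] using hfix

/-- **Support bound at extreme points of `{x ≥ 0, ⟪a i, x⟫ ≥ b i}`.** If `x` is an extreme
point of `P = {x : ℝⁿ | x ≥ 0 componentwise, ∀ i, ⟪a i, x⟫ ≥ b i}` with `|ι| = m`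
inequality constraints, then `x` has at most `m` nonzero coordinates. -/
theorem extremePoint_support_card_le_of_inequalities
    (n : ℕ) (ι : Type) [Fintype ι] (m : ℕ) (hm : Fintype.card ι = m)
    (a : ι → EuclideanSpace ℝ (Fin n)) (b : ι → ℝ)
    (P : Set (EuclideanSpace ℝ (Fin n)))
    (hP : P = {x | (∀ j : Fin n, 0 ≤ x j) ∧ ∀ i : ι, b i ≤ (inner ℝ (a i) x : ℝ)})
    (x : EuclideanSpace ℝ (Fin n)) (hx : x ∈ Set.extremePoints ℝ P) :
    Set.ncard {j : Fin n | x j ≠ 0} ≤ m := by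
  subst hm hP
  by_contra! hcard
  obtain ⟨hxnonneg, hxineq⟩ := hx.1
  set S : Set (Fin n) := {j | x j ≠ 0}
  let φ : ι ⊕ ↥Sᶜ → EuclideanSpace ℝ (Fin n) →ₗ[ℝ] ℝ :=
    Sum.elim (fun i => innerₛₗ ℝ (a i)) (fun j => (EuclideanSpace.proj (j : Fin n)).toLinearMap)
  have hφ : Nat.card (ι ⊕ ↥Sᶜ) < finrank ℝ (EuclideanSpace ℝ (Fin n)) := by
    have hsplit := Set.ncard_compl_add_ncard S
    rw [Nat.card_sum, Nat.card_coe_set_eq, Nat.card_eq_fintype_card, finrank_euclideanSpace_fin]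
    simp only [Nat.card_eq_fintype_card, Fintype.card_fin] at hsplit
    omega
  obtain ⟨y, hy0, hy⟩ := exists_ne_zero_forall_eq_zero_of_card_lt_finrank φ hφ
  refine hy0 (eq_zero_of_mem_extremePoints_of_eventually_add_smul_mem hx ?_)
  filter_upwards [eventually_forall_nonneg_add_mul (x := x.ofLp) (y := y.ofLp) hxnonneg
    fun j hj => hy (.inr ⟨j, by simpa [S] using hj⟩)] with t ht
  refine ⟨fun j => by simpa using ht j, fun i => ?_⟩
  have hyi : inner ℝ (a i) y = 0 := hy (.inl i)
  simpa [inner_add_right, inner_smul_right, hyi] using hxineq i
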